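/- arXiv:2601.06587 — 5 statements merged into one kernel-verified Lean document; each statement's English description precedes it below -/
import Mathlib

section
/- Let B be a band (a finite semigroup in which every element is idempotent). Then for all a, b ∈ B, the intersection of the principal two-sided ideals BaB ∩ BbB equals BabB. -/
/-- The principal two-sided ideal `BaB = {u*a*v : u, v ∈ B}` of an element of a semigroup
in which every element is idempotent (a band). -/
def prinIdeal {B : Type*} [Semigroup B] (a : B) : Set B := {z | ∃ u v : B, z = u * a * v}

/-- In a band, if `z ∈ BaB` then `z * a * z = z`. -/
lemma band_sandwich {B : Type*} [Semigroup B] (hband : ∀ x : B, x * x = x)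
    {z a u v : B} (h : z = u * a * v) : z * a * z = z := by
  subst h
  calc (u * a * v) * a * (u * a * v)
      = (u * a) * (v * (a * (u * (a * v)))) := by simp only [mul_assoc]
    _ = ((u * a) * (u * a)) * (v * (a * (u * (a * v)))) := by rw [hband (u * a)]
    _ = u * ((a * (u * (a * v))) * (a * (u * (a * v)))) := by simp only [mul_assoc]
    _ = u * (a * (u * (a * v))) := by rw [hband (a * (u * (a * v)))]
    _ = ((u * a) * (u * a)) * v := by simp only [mul_assoc]
    _ = (u * a) * v := by rw [hband (u * a)]

/-- In a band, if `z*a*z = z` and `z*b*z = z` then `z*(a*b)*z = z`. -/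
lemma band_mid {B : Type*} [Semigroup B] (hband : ∀ x : B, x * x = x)
    {z a b : B} (ha : z * a * z = z) (hb : z * b * z = z) : z * (a * b) * z = z := by
  calc z * (a * b) * z
      = z * (a * (b * z)) := by simp only [mul_assoc]
    _ = (z * b * z) * (a * (b * z)) := by rw [hb]
    _ = (z * b * z) * (a * (b * (z * a * z))) := by rw [ha]
    _ = z * (((b * (z * a)) * (b * (z * a))) * z) := by simp only [mul_assoc]
    _ = z * ((b * (z * a)) * z) := by rw [hband (b * (z * a))]
    _ = z * b * (z * a * z) := by simp only [mul_assoc]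
    _ = z * b * z := by rw [ha]
    _ = z := hb

/-- Clifford's theorem: in a band, `BaB ∩ BbB = BabB`. -/
theorem clifford_inter_prinIdeal {B : Type*} [Semigroup B] [Finite B]
    (hband : ∀ x : B, x * x = x) (a b : B) :
    prinIdeal a ∩ prinIdeal b = prinIdeal (a * b) := by
  ext z
  constructor
  · rintro ⟨⟨u, v, huv⟩, ⟨p, q, hpq⟩⟩
    have ha : z * a * z = z := band_sandwich hband huv
    have hb : z * b * z = z := band_sandwich hband hpq
    exact ⟨z, z, (band_mid hband ha hb).symm⟩
  · rintro ⟨u, v, h⟩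
    refine ⟨⟨u, b * v, ?_⟩, ⟨u * a, v, ?_⟩⟩ <;>
      · rw [h]; simp only [mul_assoc]
end

section
/- Let X be a set, k a commutative ring, ≡ an equivalence relation on X, and R ⊆ ≡ a binary relation. Let V be the k-submodule of the free k-module k[X] spanned by all differences x − y with x ≡ y, and W the submodule spanned by all differences x − y with (x,y) ∈ R. Then R generates ≡ (as an equivalence relation) if and only if V = W. -/
/-- Let `≡` be an equivalence relation on `X` and `R ⊆ ≡`.  Let `V` be the submodule of the
free module `k[X]` spanned by differences `x - y` with `x ≡ y` and `W` the submodule spanned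
by differences `x - y` with `R x y`.  Then `R` generates `≡` iff `V = W`. -/
theorem generates_iff_span_differences_eq {X : Type*} (k : Type*) [CommRing k] [Nontrivial k]
    (eqv : X → X → Prop) (heqv : Equivalence eqv)
    (R : X → X → Prop) (hR : ∀ x y, R x y → eqv x y) :
    (∀ x y, Relation.EqvGen R x y ↔ eqv x y) ↔
      Submodule.span k {f : X →₀ k | ∃ x y, eqv x y ∧
          f = Finsupp.single x 1 - Finsupp.single y 1} =
        Submodule.span k {f : X →₀ k | ∃ x y, R x y ∧
          f = Finsupp.single x 1 - Finsupp.single y 1} := by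
  constructor
  · intro hgen
    apply le_antisymm
    · rw [Submodule.span_le]
      rintro f ⟨x, y, hxy, rfl⟩
      have h : Relation.EqvGen R x y := (hgen x y).mpr hxy
      clear hxy
      induction h with
      | rel a b hab =>
          exact Submodule.subset_span ⟨a, b, hab, rfl⟩
      | refl a => simp
      | symm a b _ ih =>
          have := Submodule.neg_mem _ ih
          simpa using this
      | trans a b c _ _ ih1 ih2 =>
          have := Submodule.add_mem _ ih1 ih2
          simpa using this
    · exact Submodule.span_mono fun f ⟨x, y, hxy, hf⟩ => ⟨x, y, hR x y hxy, hf⟩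
  · intro hspan x y
    constructor
    · intro h
      induction h with
      | rel a b hab => exact hR a b hab
      | refl a => exact heqv.refl a
      | symm a b _ ih => exact heqv.symm ih
      | trans a b c _ _ ih1 ih2 => exact heqv.trans ih1 ih2
    · intro hxy
      have hmem : (Finsupp.single x 1 - Finsupp.single y 1 : X →₀ k) ∈
          Submodule.span k {f : X →₀ k | ∃ x y, R x y ∧
            f = Finsupp.single x 1 - Finsupp.single y 1} := by
        rw [← hspan]
        exact Submodule.subset_span ⟨x, y, hxy, rfl⟩
      set s := Relation.EqvGen.setoid R
      set φ := Finsupp.lmapDomain k k (Quotient.mk s) with hφ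
      have hker : Submodule.span k {f : X →₀ k | ∃ x y, R x y ∧
          f = Finsupp.single x 1 - Finsupp.single y 1} ≤ LinearMap.ker φ := by
        rw [Submodule.span_le]
        rintro f ⟨a, b, hab, rfl⟩
        have hq : Quotient.mk s a = Quotient.mk s b :=
          Quotient.sound (Relation.EqvGen.rel a b hab)
        rw [SetLike.mem_coe, LinearMap.mem_ker, map_sub]
        simp [φ, Finsupp.mapDomain_single, hq]
      have h0 : φ (Finsupp.single x 1 - Finsupp.single y 1) = 0 := hker hmem
      rw [map_sub, sub_eq_zero] at h0
      simp only [φ, Finsupp.lmapDomain_apply, Finsupp.mapDomain_single] at h0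
      have : Quotient.mk s x = Quotient.mk s y := by
        rcases (Finsupp.single_eq_single_iff _ _ _ _).mp h0 with ⟨h, _⟩ | ⟨h, _⟩
        · exact h
        · exact absurd h one_ne_zero
      exact Quotient.exact this
end

section
/- Let R be a ring (not assumed unital), J a nilpotent two-sided ideal of R, and R' a subring of R such that R' + J² = R. Then R' = R. -/
open scoped Pointwise

/-- `setPow s n` is the set of products of `n+1` elements of `s` (pointwise). -/
def setPow {R : Type*} [Mul R] (s : Set R) : ℕ → Set R
  | 0 => s
  | n + 1 => setPow s n * s

/-!
Write `Jᵏ` for the additive subgroup generated by `k`-fold products of elements of `J`, and `S`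
for the additive subgroup underlying `R'`. We show `R = S + Jᵏ` for every `k ≥ 2`; nilpotency then
gives `R = S`. If `R = S + Jᵏ`, write `x, y ∈ J` as `x = a + s`, `y = b + t` with `a, b ∈ S` and
`s, t ∈ Jᵏ`. Then `a = x - s ∈ J`, so `x y = a b + a t + s y ∈ S + Jᵏ⁺¹`. Hence
`J² ⊆ S + Jᵏ⁺¹`, and `R = S + J² = S + Jᵏ⁺¹`.
-/

theorem setPow_add {M : Type*} [Semigroup M] (s : Set M) (m : ℕ) :
    ∀ n, setPow s (m + n + 1) = setPow s m * setPow s n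
  | 0 => rfl
  | n + 1 => by
    change setPow s (m + n + 1) * s = _
    rw [setPow_add s m n, mul_assoc]
    rfl

theorem AddSubgroup.mul_mem_closure_mul {R : Type*} [NonUnitalNonAssocRing R] {S T : Set R}
    {x y : R} (hx : x ∈ closure S) (hy : y ∈ closure T) : x * y ∈ closure (S * T) := by
  suffices ∀ a ∈ S, a * y ∈ closure (S * T) from
    (closure_le ((closure (S * T)).comap (AddMonoidHom.mulRight y))).2 this hx
  intro a ha
  exact (closure_le ((closure (S * T)).comap (AddMonoidHom.mulLeft a))).2
    (fun b hb => subset_closure (Set.mul_mem_mul ha hb)) hy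

namespace TwoSidedIdeal

variable {R : Type*} [NonUnitalRing R] (J : TwoSidedIdeal R)

theorem setPow_subset : ∀ n, setPow (J : Set R) n ⊆ J
  | 0 => subset_rfl
  | _ + 1 => by
    rintro _ ⟨p, -, y, hy, rfl⟩
    exact J.mul_mem_left p y hy

theorem mem_of_mem_closure_setPow {n : ℕ} {x : R}
    (hx : x ∈ AddSubgroup.closure (setPow (J : Set R) n)) : x ∈ J :=
  (AddSubgroup.closure_le (AddSubgroup.ofClass J)).2 (J.setPow_subset n) hx

variable {J} (R' : NonUnitalSubring R)

theorem mul_mem_sup_closure_setPow_succ {m : ℕ}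
    (hR : ∀ r : R, r ∈ R'.toAddSubgroup ⊔ AddSubgroup.closure (setPow (J : Set R) m))
    {x y : R} (hx : x ∈ J) (hy : y ∈ J) :
    x * y ∈ R'.toAddSubgroup ⊔ AddSubgroup.closure (setPow (J : Set R) (m + 1)) := by
  obtain ⟨a, ha, s, hs, rfl⟩ := AddSubgroup.mem_sup.1 (hR x)
  obtain ⟨b, hb, t, ht, rfl⟩ := AddSubgroup.mem_sup.1 (hR y)
  have haJ : a ∈ J := by
    simpa using J.sub_mem hx (J.mem_of_mem_closure_setPow hs)
  have hat : a * t ∈ AddSubgroup.closure (setPow (J : Set R) (m + 1)) := by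
    rw [← zero_add m, setPow_add]
    exact AddSubgroup.mul_mem_closure_mul (AddSubgroup.subset_closure haJ) ht
  have hsy : s * (b + t) ∈ AddSubgroup.closure (setPow (J : Set R) (m + 1)) :=
    AddSubgroup.mul_mem_closure_mul hs (AddSubgroup.subset_closure hy)
  have hexpand : (a + s) * (b + t) = a * b + (a * t + s * (b + t)) := by noncomm_ring
  rw [hexpand]
  exact AddSubgroup.add_mem _ (AddSubgroup.mem_sup_left (R'.mul_mem ha hb))
    (AddSubgroup.mem_sup_right (AddSubgroup.add_mem _ hat hsy))

theorem mem_sup_closure_setPow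
    (hsum : ∀ r : R, ∃ a ∈ R', r - a ∈ AddSubgroup.closure ((J : Set R) * (J : Set R))) :
    ∀ (m : ℕ) (r : R), r ∈ R'.toAddSubgroup ⊔ AddSubgroup.closure (setPow (J : Set R) (m + 1))
  | 0, r => by
    obtain ⟨a, ha, hra⟩ := hsum r
    have h := (R'.toAddSubgroup ⊔ AddSubgroup.closure (setPow (J : Set R) 1)).add_mem
      (AddSubgroup.mem_sup_left ha) (AddSubgroup.mem_sup_right hra)
    rwa [add_sub_cancel] at h
  | m + 1, r => by
    obtain ⟨a, ha, hra⟩ := hsum r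
    have hJJ : AddSubgroup.closure ((J : Set R) * (J : Set R)) ≤
        R'.toAddSubgroup ⊔ AddSubgroup.closure (setPow (J : Set R) (m + 2)) := by
      rw [AddSubgroup.closure_le]
      rintro _ ⟨x, hx, y, hy, rfl⟩
      exact mul_mem_sup_closure_setPow_succ R' (mem_sup_closure_setPow hsum m) hx hy
    have h := (R'.toAddSubgroup ⊔ _).add_mem (AddSubgroup.mem_sup_left ha) (hJJ hra)
    rwa [add_sub_cancel] at h

end TwoSidedIdeal

/-- Let `R` be a (not necessarily unital) ring, `J` a nilpotent two-sided ideal, and `R'`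
a subring with `R' + J² = R`.  Then `R' = R`. -/
theorem subring_plus_sq_nilpotent_eq {R : Type*} [NonUnitalRing R]
    (J : TwoSidedIdeal R) (hnil : ∃ n : ℕ, setPow (J : Set R) n ⊆ {0})
    (R' : NonUnitalSubring R)
    (hsum : ∀ r : R, ∃ a ∈ R', r - a ∈ AddSubgroup.closure ((J : Set R) * (J : Set R))) :
    ∀ r : R, r ∈ R' := by
  intro r
  obtain ⟨n, hn⟩ := hnil
  have hbot : AddSubgroup.closure (setPow (J : Set R) (n + 1)) = ⊥ := by
    rw [AddSubgroup.closure_eq_bot_iff]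
    rintro _ ⟨p, hp, y, -, rfl⟩
    simp [Set.mem_singleton_iff.1 (hn hp)]
  have hr := J.mem_sup_closure_setPow R' hsum n r
  rwa [hbot, sup_bot_eq] at hr
end

section
/- Let S be a finite semigroup, k a commutative ring, and J a nilpotent two-sided ideal of the (possibly non-unital) semigroup algebra kS such that the quotient ring kS/J has a left identity. Then kS has a left identity if and only if kS·J = J. -/
open scoped Pointwise

section Aux

variable {A : Type*} [NonUnitalRing A] {J : TwoSidedIdeal A}

/-- The additive subgroup generated by products of `n+1` elements of `J`. -/
def Tpow (J : TwoSidedIdeal A) (n : ℕ) : AddSubgroup A :=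
  AddSubgroup.closure (setPow (J : Set A) n)

lemma mem_Tpow_zero {x : A} (hx : x ∈ J) : x ∈ Tpow J 0 :=
  AddSubgroup.subset_closure hx

lemma Tpow_mul_mem {m : ℕ} {x j : A} (hx : x ∈ Tpow J m) (hj : j ∈ J) :
    x * j ∈ Tpow J (m + 1) := by
  have hle : Tpow J m ≤ (Tpow J (m + 1)).comap (AddMonoidHom.mulRight j) := by
    rw [Tpow, AddSubgroup.closure_le]
    intro p hp
    simp only [Set.mem_preimage, SetLike.mem_coe, AddSubgroup.mem_comap,
      AddMonoidHom.coe_mulRight]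
    exact AddSubgroup.subset_closure (Set.mul_mem_mul hp hj)
  exact hle hx

lemma key_mul (h : ∀ x : A, x ∈ J →
      x ∈ AddSubgroup.closure {z : A | ∃ a : A, ∃ j ∈ J, z = a * j})
    {m : ℕ} {e : A} (He : ∀ x : A, e * x - x ∈ Tpow J m) (b : A) :
    ∀ j ∈ J, e * (b * j) - b * j ∈ Tpow J (m + 1) := by
  intro j hj
  have hle : AddSubgroup.closure {z : A | ∃ a : A, ∃ j ∈ J, z = a * j} ≤
      (Tpow J (m + 1)).comap
        ((AddMonoidHom.mulLeft e - AddMonoidHom.id A).comp (AddMonoidHom.mulLeft b)) := by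
    rw [AddSubgroup.closure_le]
    rintro z ⟨a, kk, hkk, rfl⟩
    simp only [Set.mem_preimage, SetLike.mem_coe, AddSubgroup.mem_comap,
      AddMonoidHom.coe_comp, Function.comp_apply, AddMonoidHom.sub_apply,
      AddMonoidHom.coe_mulLeft, AddMonoidHom.id_apply]
    have heq : e * (b * (a * kk)) - b * (a * kk) = (e * (b * a) - b * a) * kk := by
      simp only [sub_mul, mul_assoc]
    rw [heq]
    exact Tpow_mul_mem (He (b * a)) hkk
  have := hle (h j hj)
  simpa using this

lemma key_one (h : ∀ x : A, x ∈ J →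
      x ∈ AddSubgroup.closure {z : A | ∃ a : A, ∃ j ∈ J, z = a * j})
    {m : ℕ} {e : A} (He : ∀ x : A, e * x - x ∈ Tpow J m) :
    ∀ j ∈ J, e * j - j ∈ Tpow J (m + 1) := by
  intro j hj
  have hle : AddSubgroup.closure {z : A | ∃ a : A, ∃ j ∈ J, z = a * j} ≤
      (Tpow J (m + 1)).comap (AddMonoidHom.mulLeft e - AddMonoidHom.id A) := by
    rw [AddSubgroup.closure_le]
    rintro z ⟨a, kk, hkk, rfl⟩
    simp only [Set.mem_preimage, SetLike.mem_coe, AddSubgroup.mem_comap,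
      AddMonoidHom.sub_apply, AddMonoidHom.coe_mulLeft, AddMonoidHom.id_apply]
    have heq : e * (a * kk) - a * kk = (e * a - a) * kk := by
      simp only [sub_mul, mul_assoc]
    rw [heq]
    exact Tpow_mul_mem (He a) hkk
  have := hle (h j hj)
  simpa using this

lemma ed_sub (h : ∀ x : A, x ∈ J →
      x ∈ AddSubgroup.closure {z : A | ∃ a : A, ∃ j ∈ J, z = a * j})
    {m : ℕ} {e : A} (He : ∀ x : A, e * x - x ∈ Tpow J m) :
    ∀ d ∈ Tpow J m, e * d - d ∈ Tpow J (m + 1) := by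
  intro d hd
  have hle : Tpow J m ≤
      (Tpow J (m + 1)).comap (AddMonoidHom.mulLeft e - AddMonoidHom.id A) := by
    rw [Tpow, AddSubgroup.closure_le]
    intro p hp
    simp only [Set.mem_preimage, SetLike.mem_coe, AddSubgroup.mem_comap,
      AddMonoidHom.sub_apply, AddMonoidHom.coe_mulLeft, AddMonoidHom.id_apply]
    cases m with
    | zero => exact key_one h He p hp
    | succ s =>
      obtain ⟨q, hq', j, hj, rfl⟩ := hp
      exact key_mul h He q j hj
  have := hle hd
  simpa using this

lemma step_lemma (h : ∀ x : A, x ∈ J →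
      x ∈ AddSubgroup.closure {z : A | ∃ a : A, ∃ j ∈ J, z = a * j})
    {m : ℕ} {e : A} (He : ∀ x : A, e * x - x ∈ Tpow J m) :
    ∀ x : A, (e + e - e * e) * x - x ∈ Tpow J (m + 1) := by
  intro x
  have h2 := ed_sub h He _ (He x)
  have heq : (e + e - e * e) * x - x = -(e * (e * x - x) - (e * x - x)) := by
    simp only [sub_mul, add_mul, mul_sub, mul_assoc]
    abel
  rw [heq]
  exact neg_mem h2

lemma exists_left_approx (h : ∀ x : A, x ∈ J →
      x ∈ AddSubgroup.closure {z : A | ∃ a : A, ∃ j ∈ J, z = a * j})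
    {e₀ : A} (He₀ : ∀ x : A, e₀ * x - x ∈ J) (m : ℕ) :
    ∃ e : A, ∀ x : A, e * x - x ∈ Tpow J m := by
  induction m with
  | zero => exact ⟨e₀, fun x => mem_Tpow_zero (He₀ x)⟩
  | succ s ih =>
    obtain ⟨e, He⟩ := ih
    exact ⟨e + e - e * e, step_lemma h He⟩

end Aux

/-- Let `S` be a finite semigroup, `k` a commutative ring, and `J` a nilpotent two-sided
ideal of the semigroup algebra `kS` such that `kS/J` has a left identity.  Then `kS` has a
left identity iff `kS·J = J`. -/
theorem semigroupAlgebra_left_identity_iff {S : Type*} [Semigroup S] [Fintype S]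
    (k : Type*) [CommRing k] (J : TwoSidedIdeal (MonoidAlgebra k S))
    (hnil : ∃ n : ℕ, setPow (J : Set (MonoidAlgebra k S)) n ⊆ {0})
    (hq : ∃ e : J.ringCon.Quotient, ∀ x : J.ringCon.Quotient, e * x = x) :
    (∃ e : MonoidAlgebra k S, ∀ x : MonoidAlgebra k S, e * x = x) ↔
      (∀ x : MonoidAlgebra k S, x ∈ J ↔
        x ∈ AddSubgroup.closure {z : MonoidAlgebra k S |
          ∃ a : MonoidAlgebra k S, ∃ j ∈ J, z = a * j}) := by
  constructor
  · rintro ⟨e, he⟩ x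
    constructor
    · intro hx
      exact AddSubgroup.subset_closure ⟨e, x, hx, (he x).symm⟩
    · intro hx
      refine AddSubgroup.closure_induction ?_ J.zero_mem
        (fun a b _ _ ha hb => J.add_mem ha hb) (fun a _ ha => J.neg_mem ha) hx
      rintro z ⟨a, j, hj, rfl⟩
      exact J.mul_mem_left a j hj
  · intro h
    obtain ⟨ebar, hebar⟩ := hq
    obtain ⟨e₀, he₀⟩ := Quotient.exists_rep ebar
    have hbase : ∀ x : MonoidAlgebra k S, e₀ * x - x ∈ J := by
      intro x
      have h1 : ((e₀ * x : MonoidAlgebra k S) : J.ringCon.Quotient)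
          = ((x : MonoidAlgebra k S) : J.ringCon.Quotient) := by
        rw [RingCon.coe_mul]
        have h2 : (e₀ : J.ringCon.Quotient) = ebar := he₀
        rw [h2]
        exact hebar _
      exact (J.rel_iff _ _).mp (J.ringCon.eq.mp h1)
    obtain ⟨n, hn⟩ := hnil
    obtain ⟨e, He⟩ := exists_left_approx (fun x hx => (h x).mp hx) hbase n
    refine ⟨e, fun x => ?_⟩
    have hbot : Tpow J n ≤ ⊥ := by
      rw [Tpow, AddSubgroup.closure_le, AddSubgroup.coe_bot]
      exact hn
    have := hbot (He x)
    rw [AddSubgroup.mem_bot, sub_eq_zero] at this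
    exact this
end

section
/- Let L be a finite meet semilattice and k a commutative ring. Then the semigroup algebra kL is isomorphic as a k-algebra to the product ring k^L, via the map sending ℓ ∈ L to the characteristic function of the down-set {m ∈ L : m ≤ ℓ}. -/
/-!
The map is the linear extension of the multiplicative map `ℓ ↦ 1_{≤ ℓ}`, which is multiplicative
because `m ≤ ℓ ⊓ ℓ'` iff `m ≤ ℓ` and `m ≤ ℓ'`. In the bases `{ℓ}` and `{δ_m}` its matrix is the
zeta matrix of `L`, which is unitriangular with respect to any linear extension of the order,
hence has determinant `1` and is invertible over every commutative ring.
-/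

open Matrix

theorem Matrix.det_of_eq_zero_of_not_le {α R : Type*} [PartialOrder α] [Fintype α]
    [DecidableEq α] [CommRing R] (M : Matrix α α R) (hM : ∀ i j, ¬ i ≤ j → M i j = 0) :
    M.det = ∏ i, M i i := by
  let _ : Fintype (LinearExtension α) := ‹Fintype α›
  let _ : DecidableEq (LinearExtension α) := ‹DecidableEq α›
  let e : α ≃ LinearExtension α := Equiv.refl α
  have htri : (reindex e e M).IsUpperTriangular := fun i j hji =>
    hM (e.symm i) (e.symm j) fun hij => hji.not_ge ((toLinearExtension (α := α)).monotone hij)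
  rw [← det_reindex_self e M, det_of_isUpperTriangular htri]
  rfl

def zetaMatrix (α R : Type*) [LE α] [DecidableRel (α := α) (· ≤ ·)] [Zero R] [One R] :
    Matrix α α R :=
  of fun i j => if i ≤ j then 1 else 0

section ZetaMatrix

variable (α R : Type*) [PartialOrder α] [Fintype α] [DecidableRel (α := α) (· ≤ ·)] [CommRing R]

theorem det_zetaMatrix [DecidableEq α] : (zetaMatrix α R).det = 1 := by
  rw [det_of_eq_zero_of_not_le (zetaMatrix α R) fun i j hij => if_neg hij]
  exact Finset.prod_eq_one fun i _ => if_pos le_rfl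

theorem isUnit_zetaMatrix [DecidableEq α] : IsUnit (zetaMatrix α R) :=
  (isUnit_iff_isUnit_det _).2 (by rw [det_zetaMatrix]; exact isUnit_one)

theorem mulVec_zetaMatrix_bijective : Function.Bijective (zetaMatrix α R *ᵥ ·) := by
  classical
  exact ⟨mulVec_injective_of_isUnit (isUnit_zetaMatrix α R),
    mulVec_surjective_iff_isUnit.2 (isUnit_zetaMatrix α R)⟩

end ZetaMatrix

abbrev SemilatticeInf.toMul (L : Type*) [SemilatticeInf L] : Mul L := ⟨(· ⊓ ·)⟩

section Solomon

attribute [local instance] SemilatticeInf.toMul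

variable {L : Type*} [SemilatticeInf L] [DecidableRel (α := L) (· ≤ ·)] (k : Type*)
  [CommSemiring k]

def downSetIndicator : L →ₙ* (L → k) where
  toFun ℓ m := if m ≤ ℓ then 1 else 0
  map_mul' a b := funext fun m => by
    change (if m ≤ a ⊓ b then _ else _) = _
    simp only [le_inf_iff, Pi.mul_apply, ite_zero_mul_ite_zero, mul_one]

noncomputable def solomonHom : MonoidAlgebra k L →ₙₐ[k] (L → k) :=
  MonoidAlgebra.liftMagma k (downSetIndicator k)

theorem solomonHom_single (ℓ : L) (c : k) :
    solomonHom k (MonoidAlgebra.single ℓ c) = c • downSetIndicator k ℓ := by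
  simp [solomonHom]

variable [Fintype L]

theorem solomonHom_eq_zetaMatrix_mulVec (f : MonoidAlgebra k L) :
    solomonHom k f = zetaMatrix L k *ᵥ ⇑f.coeff := by
  ext m
  simp [solomonHom, zetaMatrix, downSetIndicator, mulVec, dotProduct, Finsupp.sum_fintype]

theorem solomonHom_bijective (k : Type*) [CommRing k] :
    Function.Bijective (solomonHom k (L := L)) := by
  have hcoeff : Function.Bijective fun f : MonoidAlgebra k L => ⇑f.coeff :=
    (MonoidAlgebra.coeffEquiv.trans Finsupp.equivFunOnFinite).bijective
  convert (mulVec_zetaMatrix_bijective L k).comp hcoeff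
  exact funext (solomonHom_eq_zetaMatrix_mulVec k)

end Solomon

/-- Solomon's theorem: for a finite meet semilattice `L` (a commutative band under `⊓`),
the semigroup algebra `kL` is isomorphic as a `k`-algebra to the product ring `k^L`,
via `ℓ ↦` the characteristic function of `{m | m ≤ ℓ}`. -/
theorem solomon_semilattice_algebra_iso (L : Type*) [SemilatticeInf L] [Fintype L]
    [DecidableRel (α := L) (· ≤ ·)] (k : Type*) [CommRing k] :
    letI : Mul L := ⟨(· ⊓ ·)⟩
    ∃ e : MonoidAlgebra k L ≃+* (L → k),
      (∀ (c : k) (f : MonoidAlgebra k L), e (c • f) = c • e f) ∧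
      (∀ ℓ : L, e (MonoidAlgebra.single ℓ 1) = fun m => if m ≤ ℓ then (1 : k) else 0) :=
  letI : Mul L := ⟨(· ⊓ ·)⟩
  ⟨RingEquiv.ofBijective (solomonHom k) (solomonHom_bijective k), map_smul (solomonHom k),
    fun ℓ => (solomonHom_single k ℓ 1).trans (one_smul k _)⟩
end
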